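/- Let X be a locally compact Hausdorff space, Δ ⊆ X an open subset, φ : Δ → X a continuous proper map, and let α : C₀(X) → C₀(X) be the *-homomorphism given by α(a)(x) = a(φ(x)) for x ∈ Δ and α(a)(x) = 0 for x ∉ Δ. Then: (1) ker α is a complemented ideal of C₀(X), i.e. ker α + (ker α)^⊥ = C₀(X), if and only if φ(Δ) is open in X; (2) the system (C₀(X), α) is reversible — i.e. ker α is complemented and the range α(C₀(X)) is a hereditary C*-subalgebra of C₀(X) — if and only if φ(Δ) is open in X and φ is a homeomorphism of Δ onto φ(Δ). -/

import Mathlib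

open scoped ZeroAtInfty Classical

/-!
Since `φ` is proper, `Y = φ(Δ)` is closed. The kernel of `α` consists of the functions vanishing
on `Y` and its annihilator of those supported in `Y`, so the kernel is complemented exactly when
every function splits into a part vanishing on `Y` and a part supported in `Y`. Splitting a
function equal to `1` at `y ∈ Y` gives a summand whose open support contains `y` and lies in `Y`,
so `Y` is open; conversely, for clopen `Y` one cuts a function off along `Y`.
If the range of `α` is hereditary, then `α a * x * α a` with `a(φ t₁) = 1`, `x(t₁) = 1` and
`x(t₂) = 0` lies in the range and separates `t₁` from `t₂` through `φ`; so `φ` is injective, and an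
injective proper map is a closed embedding. Conversely, if `φ : Δ ≃ₜ Y` with `Y` clopen, every
`f ∈ C₀(X)` supported in `Δ` equals `α` of `f ∘ φ⁻¹` extended by zero off `Y`, and `u x u'` is
supported in `Δ` whenever `u` is in the range of `α`.
-/

open Set Filter Topology Function

namespace ZeroAtInftyContinuousMap

variable {X β : Type*} [TopologicalSpace X] [TopologicalSpace β] [Zero β]

def restrictOfSupportSubset (f : C₀(X, β)) {U : Set X} (hf : support f ⊆ U) : C₀(U, β) where
  toContinuousMap := (f : C(X, β)).restrict U
  zero_at_infty' := by
    refine (nhds_basis_opens 0).tendsto_right_iff.mpr fun V ⟨h0V, hVo⟩ => ?_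
    obtain ⟨K, hK, hKV⟩ := mem_cocompact.mp (zero_at_infty f (hVo.mem_nhds h0V))
    have hL : K ∩ f ⁻¹' Vᶜ ⊆ U := fun x hx => hf fun h0 => hx.2 (h0 ▸ h0V)
    refine mem_cocompact.mpr ⟨(↑) ⁻¹' (K ∩ f ⁻¹' Vᶜ), ?_, fun x hx => ?_⟩
    · rw [Subtype.isCompact_iff, Subtype.image_preimage_coe, inter_eq_right.mpr hL]
      exact hK.inter_right (hVo.isClosed_compl.preimage f.continuous)
    · by_contra hxV
      exact hx ⟨not_not.mp fun hxK => hxV (hKV hxK), hxV⟩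

@[simp]
lemma restrictOfSupportSubset_apply (f : C₀(X, β)) {U : Set X} (hf : support f ⊆ U) (x : U) :
    f.restrictOfSupportSubset hf x = f x :=
  rfl

def restrictOfIsClosed (f : C₀(X, β)) {U : Set X} (hU : IsClosed U) : C₀(U, β) :=
  f.comp ⟨⟨(↑), continuous_subtype_val⟩, hU.isClosedEmbedding_subtypeVal.tendsto_cocompact⟩

@[simp]
lemma restrictOfIsClosed_apply (f : C₀(X, β)) {U : Set X} (hU : IsClosed U) (x : U) :
    f.restrictOfIsClosed hU x = f x :=
  rfl

noncomputable def extendByZero {U : Set X} (hU : IsClopen U) (g : C₀(U, β)) : C₀(X, β) where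
  toFun x := if h : x ∈ U then g ⟨x, h⟩ else 0
  continuous_toFun := by
    rw [← continuousOn_univ, ← union_compl_self U]
    refine ContinuousOn.union_of_isOpen ?_ (continuousOn_const.congr fun x hx => dif_neg hx)
      hU.isOpen hU.compl.isOpen
    rw [continuousOn_iff_continuous_domRestrict]
    refine (map_continuous g).congr fun x => ?_
    exact (dif_pos x.2 : (if h : (x : X) ∈ U then g ⟨x, h⟩ else 0) = g x).symm
  zero_at_infty' := by
    intro V hV
    obtain ⟨K, hK, hKV⟩ := mem_cocompact.mp (zero_at_infty g hV)
    refine mem_cocompact.mpr ⟨(↑) '' K, hK.image continuous_subtype_val, fun x hx => ?_⟩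
    by_cases h : x ∈ U
    · simpa [dif_pos h] using hKV fun hk => hx ⟨_, hk, rfl⟩
    · simpa [dif_neg h] using mem_of_mem_nhds hV

lemma extendByZero_apply_coe {U : Set X} (hU : IsClopen U) (g : C₀(U, β)) (x : U) :
    extendByZero hU g x = g x :=
  dif_pos x.2

lemma extendByZero_apply_of_notMem {U : Set X} (hU : IsClopen U) (g : C₀(U, β)) {x : X}
    (hx : x ∉ U) : extendByZero hU g x = 0 :=
  dif_neg hx

lemma exists_apply_eq_one_of_notMem [LocallyCompactSpace X] [T2Space X] {Y : Set X}
    (hY : IsClosed Y) {x : X} (hx : x ∉ Y) :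
    ∃ b : C₀(X, ℂ), b x = 1 ∧ ∀ y ∈ Y, b y = 0 := by
  obtain ⟨f, hf1, hf0, hfc, -⟩ :=
    exists_continuous_one_zero_of_isCompact isCompact_singleton hY
      (disjoint_singleton_left.mpr hx)
  refine ⟨⟨⟨fun z => (f z : ℂ), Complex.continuous_ofReal.comp f.continuous⟩, ?_⟩, ?_, ?_⟩
  · exact (hfc.comp_left (g := (Complex.ofReal ·)) Complex.ofReal_zero).is_zero_at_infty
  · simp [hf1 (mem_singleton x)]
  · intro y hy
    simp [hf0 hy]

end ZeroAtInftyContinuousMap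

open ZeroAtInftyContinuousMap

def KerComplemented {A : Type*} [Add A] [Mul A] [Zero A] (α : A → A) : Prop :=
  ∀ a, ∃ k c, α k = 0 ∧ (∀ b, α b = 0 → c * b = 0) ∧ a = k + c

def RangeHereditary {A : Type*} [Mul A] (α : A → A) : Prop :=
  ∀ u ∈ range α, ∀ u' ∈ range α, ∀ x, u * x * u' ∈ range α

def IsCompositionOperator {X : Type*} [TopologicalSpace X] {Δ : Set X} (φ : Δ → X)
    (α : C₀(X, ℂ) → C₀(X, ℂ)) : Prop :=
  ∀ a x, α a x = if h : x ∈ Δ then a (φ ⟨x, h⟩) else 0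

namespace IsCompositionOperator

variable {X : Type*} [TopologicalSpace X] {Δ : Set X} {φ : Δ → X} {α : C₀(X, ℂ) → C₀(X, ℂ)}

lemma apply_coe (hα : IsCompositionOperator φ α) (a : C₀(X, ℂ)) (t : Δ) :
    α a t = a (φ t) := by
  rw [hα, dif_pos t.2]

lemma support_subset (hα : IsCompositionOperator φ α) (a : C₀(X, ℂ)) :
    support (α a) ⊆ Δ := fun x hx => by
  by_contra h
  exact hx (by rw [hα, dif_neg h])

lemma eq_zero_iff (hα : IsCompositionOperator φ α) (a : C₀(X, ℂ)) :
    α a = 0 ↔ ∀ y ∈ range φ, a y = 0 := by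
  constructor
  · rintro h _ ⟨t, rfl⟩
    rw [← hα.apply_coe, h, ZeroAtInftyContinuousMap.zero_apply]
  · intro h
    ext x
    rw [hα]
    split_ifs with hx
    · exact h _ (mem_range_self _)
    · rfl

lemma mem_range_of_support_subset (hα : IsCompositionOperator φ α) (hY : IsClopen (range φ))
    (e : Δ ≃ₜ range φ) (he : ∀ t, (e t : X) = φ t) {f : C₀(X, ℂ)} (hf : support f ⊆ Δ) :
    f ∈ range α := by
  refine ⟨extendByZero hY ((f.restrictOfSupportSubset hf).comp e.symm.toCocompactMap), ?_⟩
  ext x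
  by_cases hx : x ∈ Δ
  · have : e.symm ⟨φ ⟨x, hx⟩, mem_range_self _⟩ = ⟨x, hx⟩ :=
      e.symm_apply_eq.mpr (Subtype.ext (he _).symm)
    rw [hα.apply_coe _ ⟨x, hx⟩, extendByZero_apply_coe hY _ ⟨_, mem_range_self _⟩]
    simp [this]
  · rw [hα, dif_neg hx]
    exact (notMem_support.mp fun h => hx (hf h)).symm

lemma rangeHereditary_of_homeomorph (hα : IsCompositionOperator φ α) (hY : IsClopen (range φ))
    (e : Δ ≃ₜ range φ) (he : ∀ t, (e t : X) = φ t) : RangeHereditary α := by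
  rintro _ ⟨a, rfl⟩ _ ⟨a', rfl⟩ x
  refine hα.mem_range_of_support_subset hY e he fun z hz => ?_
  exact hα.support_subset a (support_mul_subset_left _ _ (support_mul_subset_left _ _ hz))

variable [LocallyCompactSpace X] [T2Space X]

lemma annihilates_ker_iff (hα : IsCompositionOperator φ α) (hY : IsClosed (range φ))
    (c : C₀(X, ℂ)) :
    (∀ b, α b = 0 → c * b = 0) ↔ support c ⊆ range φ := by
  constructor
  · intro h x hcx
    by_contra hx
    obtain ⟨b, hb1, hb0⟩ := exists_apply_eq_one_of_notMem hY hx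
    have hcb := congr($(h b ((hα.eq_zero_iff b).mpr hb0)) x)
    exact hcx (by simpa [hb1] using hcb)
  · intro h b hb
    ext x
    by_cases hx : x ∈ range φ
    · simp [(hα.eq_zero_iff b).mp hb x hx]
    · simp [notMem_support.mp fun hcx => hx (h hcx)]

lemma kerComplemented_iff (hα : IsCompositionOperator φ α) (hY : IsClosed (range φ)) :
    KerComplemented α ↔ IsOpen (range φ) := by
  simp only [KerComplemented, hα.annihilates_ker_iff hY]
  constructor
  · intro h
    refine isOpen_iff_forall_mem_open.mpr fun y hy => ?_
    obtain ⟨a, ha1, -⟩ := exists_apply_eq_one_of_notMem isClosed_empty (notMem_empty y)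
    obtain ⟨k, c, hk, hc, rfl⟩ := h a
    refine ⟨support c, hc, c.continuous.isOpen_support, ?_⟩
    have hcy : c y = 1 := by simpa [(hα.eq_zero_iff k).mp hk y hy] using ha1
    simp [hcy]
  · intro hYo a
    set c := extendByZero ⟨hY, hYo⟩ (a.restrictOfIsClosed hY)
    refine ⟨a - c, c, (hα.eq_zero_iff _).mpr fun y hy => ?_, fun x hx => ?_, by abel⟩
    · simp [c, extendByZero_apply_coe ⟨hY, hYo⟩ _ ⟨y, hy⟩]
    · by_contra hxY
      exact hx (extendByZero_apply_of_notMem _ _ hxY)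

lemma injective_of_rangeHereditary (hα : IsCompositionOperator φ α) (h : RangeHereditary α) :
    Injective φ := by
  intro t₁ t₂ hφt
  by_contra hne
  obtain ⟨a, ha1, -⟩ := exists_apply_eq_one_of_notMem isClosed_empty (notMem_empty (φ t₁))
  obtain ⟨x, hx1, hx0⟩ := exists_apply_eq_one_of_notMem (isClosed_singleton (x := (t₂ : X)))
    (mt Subtype.ext hne)
  obtain ⟨b, hb⟩ := h (α a) ⟨a, rfl⟩ (α a) ⟨a, rfl⟩ x
  have h₁ : b (φ t₁) = 1 := by
    simpa [hα.apply_coe, ha1, hx1] using congr($hb t₁)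
  have h₂ : b (φ t₂) = 0 := by
    simpa [hα.apply_coe, hx0 _ rfl] using congr($hb t₂)
  exact one_ne_zero (h₁.symm.trans (hφt ▸ h₂))

end IsCompositionOperator

theorem stmt17_general {X : Type*} [TopologicalSpace X] [LocallyCompactSpace X] [T2Space X]
    (Δ : Set X) (φ : Δ → X) (hφc : Continuous φ)
    (hφp : ∀ K : Set X, IsCompact K → IsCompact (φ ⁻¹' K))
    (α : C₀(X, ℂ) →⋆ₙₐ[ℂ] C₀(X, ℂ))
    (hα : ∀ (a : C₀(X, ℂ)) (x : X),
      α a x = if h : x ∈ Δ then a (φ ⟨x, h⟩) else 0) :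
    -- (1) complemented kernel iff `φ(Δ)` open
    ((∀ a : C₀(X, ℂ), ∃ k c : C₀(X, ℂ), α k = 0 ∧
        (∀ b : C₀(X, ℂ), α b = 0 → c * b = 0) ∧ a = k + c) ↔
      IsOpen (Set.range φ)) ∧
    -- (2) reversibility iff `φ(Δ)` open and `φ : Δ → φ(Δ)` a homeomorphism
    (((∀ a : C₀(X, ℂ), ∃ k c : C₀(X, ℂ), α k = 0 ∧
        (∀ b : C₀(X, ℂ), α b = 0 → c * b = 0) ∧ a = k + c) ∧
      (∀ u ∈ Set.range ⇑α, ∀ u' ∈ Set.range ⇑α, ∀ x : C₀(X, ℂ),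
        u * x * u' ∈ Set.range ⇑α)) ↔
      (IsOpen (Set.range φ) ∧
        ∃ e : Δ ≃ₜ Set.range φ, ∀ x : Δ, (e x : X) = φ x)) := by
  replace hα : IsCompositionOperator φ α := hα
  have hφ : IsProperMap φ := isProperMap_iff_isCompact_preimage.mpr ⟨hφc, hφp⟩
  have hY : IsClosed (range φ) := hφ.isClosed_range
  have part1 : KerComplemented α ↔ IsOpen (range φ) := hα.kerComplemented_iff hY
  refine ⟨part1, fun ⟨hK, hH⟩ => ⟨part1.mp hK, ?_⟩, fun ⟨hYo, e, he⟩ => ⟨part1.mpr hYo, ?_⟩⟩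
  · have hφe : IsClosedEmbedding φ := .of_continuous_injective_isClosedMap hφc
      (hα.injective_of_rangeHereditary hH) hφ.isClosedMap
    exact ⟨hφe.isEmbedding.toHomeomorph, fun _ => rfl⟩
  · exact hα.rangeHereditary_of_homeomorph ⟨hY, hYo⟩ e he

/-- For the endomorphism `α` of `C₀(X)` dual to a partial dynamical
system `(X, φ)` with open domain `Δ`:
(1) `ker α` is complemented iff `φ(Δ)` is open;
(2) `(C₀(X), α)` is reversible (complemented kernel and hereditary range) iff `φ(Δ)` is
open and `φ` is a homeomorphism of `Δ` onto `φ(Δ)`. -/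
theorem stmt17 {X : Type*} [TopologicalSpace X] [LocallyCompactSpace X] [T2Space X]
    (Δ : Set X) (hΔ : IsOpen Δ) (φ : Δ → X) (hφc : Continuous φ)
    (hφp : ∀ K : Set X, IsCompact K → IsCompact (φ ⁻¹' K))
    (α : C₀(X, ℂ) →⋆ₙₐ[ℂ] C₀(X, ℂ))
    (hα : ∀ (a : C₀(X, ℂ)) (x : X),
      α a x = if h : x ∈ Δ then a (φ ⟨x, h⟩) else 0) :
    -- (1) complemented kernel iff `φ(Δ)` open
    ((∀ a : C₀(X, ℂ), ∃ k c : C₀(X, ℂ), α k = 0 ∧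
        (∀ b : C₀(X, ℂ), α b = 0 → c * b = 0) ∧ a = k + c) ↔
      IsOpen (Set.range φ)) ∧
    -- (2) reversibility iff `φ(Δ)` open and `φ : Δ → φ(Δ)` a homeomorphism
    (((∀ a : C₀(X, ℂ), ∃ k c : C₀(X, ℂ), α k = 0 ∧
        (∀ b : C₀(X, ℂ), α b = 0 → c * b = 0) ∧ a = k + c) ∧
      (∀ u ∈ Set.range ⇑α, ∀ u' ∈ Set.range ⇑α, ∀ x : C₀(X, ℂ),
        u * x * u' ∈ Set.range ⇑α)) ↔
      (IsOpen (Set.range φ) ∧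
        ∃ e : Δ ≃ₜ Set.range φ, ∀ x : Δ, (e x : X) = φ x)) :=
  stmt17_general Δ φ hφc hφp α hα
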